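/- arXiv:2411.03330 — 7 statements merged into one kernel-verified Lean document; each statement's English description precedes it below -/
import Mathlib

section
/- For every natural number n ≥ 2, the central binomial coefficient C(2n, n) is at least n^(π(2n) − π(n)), where π denotes the prime counting function. -/
theorem central_binom_ge (n : ℕ) (hn : 2 ≤ n) :
    n ^ (Nat.primeCounting (2 * n) - Nat.primeCounting n) ≤ Nat.choose (2 * n) n := by
  classical
  have hcard : Nat.primeCounting (2 * n) - Nat.primeCounting n =
      ((Finset.Ioc n (2 * n)).filter Nat.Prime).card := by
    have h1 : ∀ m : ℕ, Nat.primeCounting m = ((Finset.range (m + 1)).filter Nat.Prime).card := by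
      intro m
      rw [Nat.primeCounting, Nat.primeCounting', Nat.count_eq_card_filter_range]
    have hsplit : Finset.range (2 * n + 1) =
        Finset.range (n + 1) ∪ Finset.Ioc n (2 * n) := by
      ext x
      simp only [Finset.mem_range, Finset.mem_union, Finset.mem_Ioc]
      omega
    have hdisj : Disjoint ((Finset.range (n + 1)).filter Nat.Prime)
        ((Finset.Ioc n (2 * n)).filter Nat.Prime) := by
      refine Finset.disjoint_filter_filter ?_
      simp only [Finset.disjoint_left, Finset.mem_range, Finset.mem_Ioc]
      omega
    rw [h1, h1, hsplit, Finset.filter_union, Finset.card_union_of_disjoint hdisj]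
    omega
  rw [hcard]
  have hdvd : (∏ p ∈ (Finset.Ioc n (2 * n)).filter Nat.Prime, p) ∣ Nat.choose (2 * n) n := by
    refine Finset.prod_primes_dvd _ (fun p hp => ?_) (fun p hp => ?_)
    · simp only [Finset.mem_filter] at hp
      exact hp.2.prime
    · simp only [Finset.mem_filter, Finset.mem_Ioc] at hp
      exact hp.2.dvd_choose hp.1.1 (by omega) hp.1.2
  calc n ^ ((Finset.Ioc n (2 * n)).filter Nat.Prime).card
      ≤ ∏ p ∈ (Finset.Ioc n (2 * n)).filter Nat.Prime, p := by
        refine Finset.pow_card_le_prod _ _ _ (fun p hp => ?_)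
        simp only [Finset.mem_filter, Finset.mem_Ioc] at hp
        omega
    _ ≤ Nat.choose (2 * n) n := Nat.le_of_dvd (Nat.choose_pos (by omega)) hdvd
end

section
/- For every natural number n ≥ 2, π(2n) − π(n) < n·ln(4)/ln(n), where π is the prime counting function. -/
theorem pi_diff_bound (n : ℕ) (hn : 2 ≤ n) :
    ((Nat.primeCounting (2 * n) - Nat.primeCounting n : ℕ) : ℝ) <
      n * Real.log 4 / Real.log n := by
  classical
  set S : Finset ℕ := (Finset.Ioc n (2 * n)).filter Nat.Prime with hS
  have hcard : Nat.primeCounting (2 * n) - Nat.primeCounting n = S.card := by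
    have h2 : Nat.primeCounting (2 * n) = ((Finset.range (2 * n + 1)).filter Nat.Prime).card := by
      rw [Nat.primeCounting, Nat.primeCounting', Nat.count_eq_card_filter_range]
    have h1 : Nat.primeCounting n = ((Finset.range (n + 1)).filter Nat.Prime).card := by
      rw [Nat.primeCounting, Nat.primeCounting', Nat.count_eq_card_filter_range]
    rw [h1, h2, hS]
    have hsub : (Finset.range (n + 1)).filter Nat.Prime ⊆
        (Finset.range (2 * n + 1)).filter Nat.Prime := by
      apply Finset.filter_subset_filter
      exact Finset.range_subset_range.2 (by omega)
    rw [← Finset.card_sdiff_of_subset hsub]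
    congr 1
    ext x
    simp only [Finset.mem_sdiff, Finset.mem_filter, Finset.mem_range, Finset.mem_Ioc]
    constructor
    · rintro ⟨⟨hx1, hx2⟩, hx3⟩
      exact ⟨⟨by by_contra h; exact hx3 ⟨by omega, hx2⟩, by omega⟩, hx2⟩
    · rintro ⟨⟨hx1, hx2⟩, hx3⟩
      exact ⟨⟨by omega, hx3⟩, fun h => by omega⟩
  -- product of primes in S divides centralBinom n
  have hdvd : (∏ p ∈ S, p) ∣ Nat.centralBinom n := by
    apply Finset.prod_primes_dvd
    · intro p hp
      simp only [hS, Finset.mem_filter] at hp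
      exact hp.2.prime
    · intro p hp
      simp only [hS, Finset.mem_filter, Finset.mem_Ioc] at hp
      exact hp.2.dvd_choose hp.1.1 (by omega) (by omega)
  have hpow : n ^ S.card ≤ ∏ p ∈ S, p := by
    apply Finset.pow_card_le_prod
    intro p hp
    simp only [hS, Finset.mem_filter, Finset.mem_Ioc] at hp
    exact hp.1.1.le
  have hcb : Nat.centralBinom n < 4 ^ n := by
    have h1 : Nat.centralBinom n < (2 * n + 1).choose n := by
      have hn1 : n - 1 + 1 = n := by omega
      have h0 := Nat.choose_succ_succ' (2 * n) (n - 1)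
      rw [hn1] at h0
      rw [Nat.centralBinom, h0]
      have h2 : 0 < (2 * n).choose (n - 1) := Nat.choose_pos (by omega)
      omega
    exact h1.trans_le (Nat.choose_middle_le_pow n)
  have hlt : n ^ S.card < 4 ^ n :=
    lt_of_le_of_lt (hpow.trans (Nat.le_of_dvd n.centralBinom_pos hdvd)) hcb
  -- pass to reals
  have hltR : (n : ℝ) ^ S.card < 4 ^ n := by exact_mod_cast hlt
  have hlogn : 0 < Real.log n := Real.log_pos (by exact_mod_cast hn.trans_lt' one_lt_two)
  rw [hcard, lt_div_iff₀ hlogn]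
  have := Real.log_lt_log (by positivity) hltR
  rw [Real.log_pow, Real.log_pow] at this
  calc (S.card : ℝ) * Real.log n < n * Real.log 4 := this
  _ ≤ n * Real.log 4 := le_refl _
end

section
/- For every real x ≥ 2, π(x)/x < 1/x + 4/√x + 8/log₄(x), where π is the prime counting function and log₄ denotes logarithm base 4. -/
open Finset

theorem pi_over_x_bound (x : ℝ) (hx : 2 ≤ x) :
    (Nat.primeCounting ⌊x⌋₊ : ℝ) / x < 1 / x + 4 / Real.sqrt x + 8 / Real.logb 4 x := by
  have hx0 : (0:ℝ) < x := by linarith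
  set n := ⌊x⌋₊ with hn
  set m := ⌊Real.sqrt x⌋₊ with hm
  have hsx1 : 1 < Real.sqrt x := by
    have : Real.sqrt 1 < Real.sqrt x := Real.sqrt_lt_sqrt (by norm_num) (by linarith)
    simpa using this
  have hsx0 : 0 < Real.sqrt x := by linarith
  have hm1 : 1 ≤ m := Nat.le_floor (by exact_mod_cast hsx1.le)
  have hmsx : (m:ℝ) ≤ Real.sqrt x := Nat.floor_le (by positivity)
  have hsxm : Real.sqrt x ≤ (m:ℝ) + 1 := (Nat.lt_floor_add_one _).le
  -- the set of large primes
  set S : Finset ℕ := {p ∈ range (n+1) | p.Prime ∧ m < p} with hS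
  set k := S.card with hk
  -- π n ≤ m + k
  have hsplit : n.primeCounting ≤ m + k := by
    have h1 : n.primeCounting = ({p ∈ range (n+1) | p.Prime} : Finset ℕ).card := by
      rw [Nat.primeCounting, ← Nat.primesBelow_card_eq_primeCounting', Nat.primesBelow]
    have h2 : ({p ∈ range (n+1) | p.Prime} : Finset ℕ) ⊆
        {p ∈ range (n+1) | p.Prime ∧ p ≤ m} ∪ S := by
      intro p hp
      simp only [mem_filter, mem_range] at hp
      simp only [hS, mem_union, mem_filter, mem_range]
      rcases le_or_gt p m with h | h
      · exact Or.inl ⟨hp.1, hp.2, h⟩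
      · exact Or.inr ⟨hp.1, hp.2, h⟩
    have h3 : ({p ∈ range (n+1) | p.Prime ∧ p ≤ m} : Finset ℕ).card ≤ m := by
      have hsub : ({p ∈ range (n+1) | p.Prime ∧ p ≤ m} : Finset ℕ) ⊆ Ioc 0 m := by
        intro p hp
        simp only [mem_filter] at hp
        simp only [mem_Ioc]
        exact ⟨hp.2.1.pos, hp.2.2⟩
      simpa using card_le_card hsub
    calc n.primeCounting = _ := h1
      _ ≤ (({p ∈ range (n+1) | p.Prime ∧ p ≤ m} : Finset ℕ) ∪ S).card := card_le_card h2
      _ ≤ _ + S.card := card_union_le _ _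
      _ ≤ m + k := by omega
  -- (m+1)^k ≤ 4^n
  have hpow : (m+1)^k ≤ 4^n := by
    calc (m+1)^k ≤ ∏ p ∈ S, p := by
          refine pow_card_le_prod S _ _ ?_
          intro p hp
          simp only [hS, mem_filter] at hp
          omega
      _ ≤ primorial n := by
          refine prod_le_prod_of_subset_of_one_le' ?_ ?_
          · intro p hp
            simp only [hS, mem_filter] at hp ⊢
            exact ⟨hp.1, hp.2.1⟩
          · intro p hp _
            simp only [mem_filter] at hp
            exact hp.2.one_lt.le
      _ ≤ 4^n := primorial_le_4_pow n
  -- log form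
  have hlogx : 0 < Real.log x := Real.log_pos (by linarith)
  have hlog4 : 0 < Real.log 4 := Real.log_pos (by norm_num)
  have hklog : (k:ℝ) * Real.log x ≤ 2 * x * Real.log 4 := by
    have hR : ((m:ℝ)+1)^k ≤ (4:ℝ)^n := by exact_mod_cast hpow
    have hlR : (k:ℝ) * Real.log ((m:ℝ)+1) ≤ (n:ℝ) * Real.log 4 := by
      have := Real.log_le_log (by positivity) hR
      rwa [Real.log_pow, Real.log_pow] at this
    have hml : Real.log (Real.sqrt x) ≤ Real.log ((m:ℝ)+1) :=
      Real.log_le_log hsx0 hsxm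
    have hhalf : Real.log (Real.sqrt x) = Real.log x / 2 := Real.log_sqrt (by linarith)
    have hnx : (n:ℝ) ≤ x := Nat.floor_le hx0.le
    have h1 : (k:ℝ) * (Real.log x / 2) ≤ (n:ℝ) * Real.log 4 := by
      calc (k:ℝ) * (Real.log x / 2) = (k:ℝ) * Real.log (Real.sqrt x) := by rw [hhalf]
        _ ≤ (k:ℝ) * Real.log ((m:ℝ)+1) := by
            exact mul_le_mul_of_nonneg_left hml (by positivity)
        _ ≤ (n:ℝ) * Real.log 4 := hlR
    nlinarith [mul_le_mul_of_nonneg_right hnx hlog4.le]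
  -- assemble
  have hπ : (n.primeCounting : ℝ) ≤ (m:ℝ) + (k:ℝ) := by exact_mod_cast hsplit
  have hlogb : Real.logb 4 x = Real.log x / Real.log 4 := rfl
  have hlogb0 : 0 < Real.logb 4 x := by rw [hlogb]; positivity
  have hkx : (k:ℝ) / x ≤ 2 * Real.log 4 / Real.log x := by
    rw [div_le_div_iff₀ hx0 hlogx]
    linarith
  have h8 : 8 / Real.logb 4 x = 8 * Real.log 4 / Real.log x := by
    rw [hlogb]
    field_simp
  have hmx : (m:ℝ) / x ≤ 1 / Real.sqrt x := by
    rw [div_le_div_iff₀ hx0 hsx0] at *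
    nlinarith [Real.sq_sqrt hx0.le]
  have hkk : 2 * Real.log 4 / Real.log x < 8 * Real.log 4 / Real.log x := by
    rw [div_lt_div_iff₀ hlogx hlogx]
    nlinarith
  calc (n.primeCounting : ℝ) / x ≤ ((m:ℝ) + (k:ℝ)) / x := by
        apply div_le_div_of_nonneg_right hπ hx0.le
      _ = (m:ℝ)/x + (k:ℝ)/x := by ring
      _ < 1/x + 4/Real.sqrt x + 8/Real.logb 4 x := by
        have h1x : 0 < 1/x := by positivity
        have h4 : 1 / Real.sqrt x < 4 / Real.sqrt x := by
          rw [div_lt_div_iff₀ hsx0 hsx0]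
          nlinarith
        rw [h8]
        linarith
end

section
/- For every positive integer a and integer b, any run of consecutive values n, n+1, ..., n+L−1 (with n sufficiently large) for which a*m+b is prime for all m in the run has length L ≤ a². Equivalently, among any a²+1 consecutive sufficiently large values of n, at least one a*n+b is composite. -/
theorem prime_run_le_a_sq (a : ℕ) (ha : 1 ≤ a) (b : ℤ) :
    ∃ N : ℕ, ∀ n : ℕ, N ≤ n → ∀ L : ℕ,
      (∀ m : ℕ, n ≤ m → m < n + L → Prime ((a : ℤ) * m + b)) → L ≤ a ^ 2 := by
  set k : ℕ := a ^ 2 with hk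
  refine ⟨(k + 1) * (2 + b.natAbs) + a * b.natAbs, fun n hn L hL => ?_⟩
  by_contra hcon
  push_neg at hcon
  set D : ℤ := (a : ℤ) ^ 2 + 1 with hD
  have hDk : D = (k : ℤ) + 1 := by rw [hD, hk]; push_cast; ring
  have hDpos : 0 < D := by positivity
  set r : ℤ := ((a : ℤ) * b - n) % D with hr
  have hr0 : 0 ≤ r := Int.emod_nonneg _ hDpos.ne'
  have hrlt : r < D := Int.emod_lt_of_pos _ hDpos
  set m₀ : ℕ := n + r.toNat with hm₀
  have hm₀z : (m₀ : ℤ) = n + r := by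
    simp [hm₀, Int.toNat_of_nonneg hr0]
  have hrle : r.toNat ≤ k := by
    rw [hDk] at hrlt
    omega
  have hp := hL m₀ (Nat.le_add_right _ _) (by omega)
  set t : ℤ := -(((a : ℤ) * b - n) / D) with htdef
  have hm₀eq : (m₀ : ℤ) = (a : ℤ) * b + D * t := by
    rw [hm₀z, hr, Int.emod_def, htdef]; ring
  have hfact : (a : ℤ) * m₀ + b = D * ((a : ℤ) * t + b) := by
    rw [hm₀eq, hD]; ring
  have h2 : (a : ℤ) * b ≤ (a : ℤ) * |b| :=
    mul_le_mul_of_nonneg_left (le_abs_self b) (by positivity)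
  have h3 : ((k + 1) * (2 + b.natAbs) + a * b.natAbs : ℤ) ≤ (n : ℤ) := by
    exact_mod_cast hn
  have hnm : (n : ℤ) ≤ (m₀ : ℤ) := by exact_mod_cast Nat.le_add_right n r.toNat
  have hDt : D * (2 + (b.natAbs : ℤ)) ≤ D * t := by
    have h1 : D * t = (m₀ : ℤ) - (a : ℤ) * b := by linarith [hm₀eq]
    rw [h1, hDk]
    push_cast at h3 ⊢
    linarith
  have ht : 2 + (b.natAbs : ℤ) ≤ t := le_of_mul_le_mul_left hDt hDpos
  have ht0 : 0 ≤ t := le_trans (by positivity) ht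
  have hat : t ≤ (a : ℤ) * t :=
    le_mul_of_one_le_left ht0 (by exact_mod_cast ha)
  have hb : -|b| ≤ b := neg_abs_le b
  have ht' : 2 ≤ t := by
    have : (0 : ℤ) ≤ (b.natAbs : ℤ) := Int.natCast_nonneg _
    linarith
  have habs : (b.natAbs : ℤ) = |b| := Int.abs_eq_natAbs b ▸ rfl
  have hX : 2 ≤ (a : ℤ) * t + b := by
    have := ht
    rw [habs] at this
    linarith
  have hD2 : 2 ≤ D := by
    have h1k : 1 ≤ k := hk ▸ Nat.one_le_pow 2 a ha
    rw [hDk]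
    exact_mod_cast Nat.succ_le_succ h1k
  rw [hfact] at hp
  rcases hp.irreducible.isUnit_or_isUnit rfl with hu | hu <;>
    rw [Int.isUnit_iff] at hu <;> rcases hu with hu | hu <;> linarith
end

section
/- Let a and b be relatively prime positive integers. Then there are infinitely many n such that a*n+b is a product of exactly two (not necessarily distinct) primes. -/
theorem infinitely_many_two_composites (a b : ℕ) (ha : 0 < a) (hb : 0 < b)
    (hab : Nat.Coprime a b) :
    ∀ N : ℕ, ∃ n : ℕ, N < n ∧ ∃ p q : ℕ, p.Prime ∧ q.Prime ∧ a * n + b = p * q := by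
  intro N
  haveI : NeZero a := ⟨ha.ne'⟩
  obtain ⟨p, hpN, hp, hp1⟩ :=
    Nat.forall_exists_prime_gt_and_eq_mod (q := a) (a := 1) isUnit_one 1
  have hbu : IsUnit ((b : ZMod a)) := (ZMod.isUnit_iff_coprime b a).mpr hab.symm
  obtain ⟨q, hqN, hq, hqb⟩ :=
    Nat.forall_exists_prime_gt_and_eq_mod (q := a) (a := (b : ZMod a)) hbu (a * N + b)
  have hmod : (p * q : ℕ) ≡ b [MOD a] := by
    have : ((p * q : ℕ) : ZMod a) = ((b : ℕ) : ZMod a) := by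
      push_cast [hp1, hqb]; ring
    exact (ZMod.natCast_eq_natCast_iff _ _ _).mp this
  have hble : b ≤ p * q := by
    have h1 : b ≤ q := le_of_lt (lt_of_le_of_lt (Nat.le_add_left b (a * N)) hqN)
    calc b ≤ q := h1
      _ ≤ p * q := Nat.le_mul_of_pos_left q hp.pos
  have hdvd : a ∣ p * q - b := (Nat.modEq_iff_dvd' hble).mp hmod.symm
  refine ⟨(p * q - b) / a, ?_, p, q, hp, hq, ?_⟩
  · have hlt : a * N < p * q - b := by
      have : a * N + b < p * q := by
        calc a * N + b < q := hqN
          _ ≤ p * q := Nat.le_mul_of_pos_left q hp.pos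
      omega
    have key : a * ((p * q - b) / a) = p * q - b := Nat.mul_div_cancel' hdvd
    exact Nat.lt_of_mul_lt_mul_left (a := a) (by omega)
  · have key : a * ((p * q - b) / a) = p * q - b := Nat.mul_div_cancel' hdvd
    omega
end

section
/- Let a and b be relatively prime positive integers and k ≥ 1. Then there are infinitely many n such that a*n+b is a product of exactly k primes (counted with multiplicity). -/
/-! Pick a prime `p > N` with `p ≡ b [MOD a]` (Dirichlet) and a prime `q ≡ 1 [MOD a]`.
Then `p * q ^ (k - 1)` is a product of `k` primes, congruent to `b` modulo `a`, and as large as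
we like, so it has the form `a * n + b` with `n` as large as we like. -/

namespace Nat

theorem exists_mul_add_eq_of_modEq {a b m : ℕ} (hbm : b ≤ m) (hmod : m ≡ b [MOD a]) :
    ∃ n, a * n + b = m := by
  obtain ⟨n, hn⟩ := (modEq_iff_dvd' hbm).1 hmod.symm
  exact ⟨n, by omega⟩

theorem exists_prime_list_prod_gt_modEq {a b k : ℕ} (ha : a ≠ 0) (hab : b.Coprime a)
    (hk : k ≠ 0) (N : ℕ) :
    ∃ l : List ℕ, l.length = k ∧ (∀ p ∈ l, p.Prime) ∧ N < l.prod ∧ l.prod ≡ b [MOD a] := by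
  obtain ⟨p, hpN, hp, hpb⟩ := forall_exists_prime_gt_and_modEq N ha hab
  obtain ⟨q, hq, -, hq1⟩ := exists_prime_gt_modEq_one 0 ha
  refine ⟨p :: List.replicate (k - 1) q, by simp; omega, ?_, ?_, ?_⟩
  · rintro r (_ | ⟨_, hr⟩)
    · exact hp
    · exact List.eq_of_mem_replicate hr ▸ hq
  · rw [List.prod_cons, List.prod_replicate]
    exact hpN.trans_le (Nat.le_mul_of_pos_right p (pow_pos hq.pos _))
  · rw [List.prod_cons, List.prod_replicate]
    simpa using hpb.mul (hq1.pow (k - 1))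

end Nat

theorem infinitely_many_k_composites_general (a b : ℕ) (ha : 0 < a)
    (hab : Nat.Coprime a b) (k : ℕ) (hk : 1 ≤ k) :
    ∀ N : ℕ, ∃ n : ℕ, N < n ∧ ∃ l : List ℕ, l.length = k ∧
      (∀ p ∈ l, Nat.Prime p) ∧ a * n + b = l.prod := by
  intro N
  obtain ⟨l, hlen, hprime, hlarge, hmod⟩ := Nat.exists_prime_list_prod_gt_modEq ha.ne' hab.symm
    (Nat.one_le_iff_ne_zero.mp hk) (a * N + b)
  obtain ⟨n, hn⟩ := Nat.exists_mul_add_eq_of_modEq (by omega : b ≤ l.prod) hmod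
  exact ⟨n, Nat.lt_of_mul_lt_mul_left (a := a) (by omega), l, hlen, hprime, hn⟩

theorem infinitely_many_k_composites (a b : ℕ) (ha : 0 < a) (hb : 0 < b)
    (hab : Nat.Coprime a b) (k : ℕ) (hk : 1 ≤ k) :
    ∀ N : ℕ, ∃ n : ℕ, N < n ∧ ∃ l : List ℕ, l.length = k ∧
      (∀ p ∈ l, Nat.Prime p) ∧ a * n + b = l.prod :=
  infinitely_many_k_composites_general a b ha hab k hk
end

section
/- Let f be a non-constant polynomial with integer coefficients. Then f(n) is composite (i.e., |f(n)| is greater than 1 and not prime) for infinitely many natural numbers n. -/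
lemma poly_small_values_finite (f : Polynomial ℤ) (hf : 1 ≤ f.natDegree) (C : ℕ) :
    {n : ℕ | (f.eval (n : ℤ)).natAbs ≤ C}.Finite := by
  have hZ : {x : ℤ | (f.eval x).natAbs ≤ C}.Finite := by
    have hsub : {x : ℤ | (f.eval x).natAbs ≤ C} ⊆
        ⋃ c ∈ Finset.Icc (-(C : ℤ)) (C : ℤ), {x : ℤ | (f - Polynomial.C c).IsRoot x} := by
      intro x hx
      simp only [Set.mem_setOf_eq] at hx
      refine Set.mem_biUnion (show f.eval x ∈ Finset.Icc (-(C : ℤ)) (C : ℤ) by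
        rw [Finset.mem_Icc]
        omega) ?_
      simp [Polynomial.IsRoot]
    refine Set.Finite.subset ?_ hsub
    refine Set.Finite.biUnion (Finset.Icc _ _).finite_toSet ?_
    intro c _
    apply Polynomial.finite_setOf_isRoot
    intro h
    have : f = Polynomial.C c := by linear_combination (norm := ring_nf) h
    rw [this] at hf
    simp [Polynomial.natDegree_C] at hf
  have : {n : ℕ | (f.eval (n : ℤ)).natAbs ≤ C} =
      (fun n : ℕ => (n : ℤ)) ⁻¹' {x : ℤ | (f.eval x).natAbs ≤ C} := rfl
  rw [this]
  exact hZ.preimage (fun a _ b _ h => by exact_mod_cast h)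

theorem poly_composite_infinitely_often (f : Polynomial ℤ) (hf : 1 ≤ f.natDegree) :
    {n : ℕ | 1 < (f.eval (n : ℤ)).natAbs ∧ ¬ Prime (f.eval (n : ℤ))}.Infinite := by
  apply Set.infinite_of_forall_exists_gt
  intro N
  -- find k > N with |f(k)| ≥ 2
  have h1 : {n : ℕ | (f.eval (n : ℤ)).natAbs ≤ 1}ᶜ.Infinite :=
    Set.Finite.infinite_compl (poly_small_values_finite f hf 1)
  obtain ⟨k, hk, hkN⟩ := h1.exists_gt N
  simp only [Set.mem_compl_iff, Set.mem_setOf_eq, not_le] at hk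
  set d : ℕ := (f.eval (k : ℤ)).natAbs with hd
  have hd2 : 2 ≤ d := hk
  -- find j with |f(k + j*d)| > d
  have hAinf : (Set.range (fun j : ℕ => k + (j + 1) * d)).Infinite := by
    apply Set.infinite_range_of_injective
    intro a b hab
    simp only at hab
    have h : (a + 1) * d = (b + 1) * d := by omega
    have := Nat.eq_of_mul_eq_mul_right (show 0 < d by omega) h
    omega
  have hdiff : ((Set.range (fun j : ℕ => k + (j + 1) * d)) \
      {n : ℕ | (f.eval (n : ℤ)).natAbs ≤ d}).Infinite :=
    hAinf.diff (poly_small_values_finite f hf d)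
  obtain ⟨n, hn⟩ := hdiff.nonempty
  obtain ⟨⟨j, hj⟩, hn2⟩ := hn
  simp only [Set.mem_setOf_eq, not_le] at hn2
  -- d divides f(n)
  have hdvdZ : (d : ℤ) ∣ f.eval (n : ℤ) := by
    have h1 : ((n : ℤ) - (k : ℤ)) ∣ f.eval (n : ℤ) - f.eval (k : ℤ) :=
      Polynomial.sub_dvd_eval_sub _ _ f
    have h2 : (d : ℤ) ∣ ((n : ℤ) - (k : ℤ)) := by
      have : (n : ℤ) - (k : ℤ) = ((j : ℤ) + 1) * d := by
        rw [← hj]; push_cast; ring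
      rw [this]; exact dvd_mul_left _ _
    have h3 : (d : ℤ) ∣ f.eval (k : ℤ) := by
      rw [hd]; exact Int.natAbs_dvd.mpr dvd_rfl
    simpa using dvd_add (h2.trans h1) h3
  have hdvd : d ∣ (f.eval (n : ℤ)).natAbs := by
    have := Int.natAbs_dvd_natAbs.mpr hdvdZ
    simpa using this
  refine ⟨n, ⟨?_, ?_⟩, ?_⟩
  · omega
  · intro hp
    have hpn : Nat.Prime (f.eval (n : ℤ)).natAbs := Int.prime_iff_natAbs_prime.mp hp
    rcases hpn.eq_one_or_self_of_dvd d hdvd with h | h <;> omega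
  · have : k ≤ n := hj ▸ Nat.le_add_right _ _
    omega
end
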